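/- Let d ≥ 3 be an integer and p a prime number. Let A be the localization of the polynomial ring ℚ[x,y] away from the element (x + p^{−(d−3)})·y, and let B be the localization of ℚ[x,y] away from x·y. Then the ℚ-algebra homomorphism φ : A → B determined by x ↦ x^d/y² − p^{−(d−3)} and y ↦ x is well defined (the image of (x + p^{−(d−3)})·y equals x^{d+1}/y², a unit of B), and φ is a finite ring homomorphism, i.e. B is finitely generated as a module over A via φ. -/

import Mathlib

open MvPolynomial

/-- The polynomial ring `ℚ[x,y]`. -/
noncomputable abbrev R2 : Type := MvPolynomial (Fin 2) ℚ

/-- The constant `p^{-(d-3)} ∈ ℚ`. -/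
noncomputable def cdp (d p : ℕ) : ℚ := ((p : ℚ) ^ (d - 3))⁻¹

/-- `A`: the localization of `ℚ[x,y]` away from `(x + p^{-(d-3)})·y`. -/
noncomputable abbrev Aloc (d p : ℕ) : Type :=
  Localization.Away ((X 0 + C (cdp d p)) * X 1 : R2)

/-- `B`: the localization of `ℚ[x,y]` away from `x·y`. -/
noncomputable abbrev Bloc : Type := Localization.Away ((X 0) * (X 1) : R2)

/-!
The images `x, y` of the variables in `B` are units, and the substitution `x ↦ x^d y⁻² - c`,
`y ↦ x` sends `(x + c)y` to the unit `x^(d+1) y⁻²`, so it extends to `φ : A → B`. Its image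
contains `x`, `x⁻¹ = φ((x + c)/((x + c)y))` and `y⁻² = x⁻⁽ᵈ⁺¹⁾ φ((x + c)y)`, so `x`, `y` and
`(xy)⁻¹ = x⁻¹ y⁻² y` lie in `A[y]`, i.e. `B = A[y]`. Finally `y² = φ(y^(d+1)/((x + c)y))`, so `y`
is integral over `A` and `B` is finite over `A`.
-/

theorem IsLocalization.Away.mem_of_algebraMap_mem {R S T : Type*} [CommRing R] [CommRing S]
    [Algebra R S] [SetLike T S] [SubringClass T S] (r : R) [IsLocalization.Away r S] (t : T)
    (hR : ∀ a, algebraMap R S a ∈ t) {u : S} (hu : algebraMap R S r * u = 1) (hut : u ∈ t)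
    (z : S) : z ∈ t := by
  obtain ⟨n, a, hz⟩ := IsLocalization.Away.surj r z
  have : z = algebraMap R S a * u ^ n := by
    rw [← hz, mul_assoc, ← mul_pow, hu, one_pow, mul_one]
  exact this ▸ mul_mem (hR a) (pow_mem hut n)

theorem MvPolynomial.map_mem_of_map_C_mem_of_map_X_mem {σ R S T : Type*} [CommSemiring R]
    [CommSemiring S] [SetLike T S] [SubsemiringClass T S] (f : MvPolynomial σ R →+* S) (t : T)
    (hC : ∀ a, f (C a) ∈ t) (hX : ∀ i, f (X i) ∈ t) (q : MvPolynomial σ R) : f q ∈ t := by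
  induction q using MvPolynomial.induction_on with
  | C a => exact hC a
  | add q r hq hr => exact map_add f q r ▸ add_mem hq hr
  | mul_X q i hq => exact map_mul f q (X i) ▸ mul_mem hq (hX i)

/-- `Aloc d p` is `AwayXAddCY (cdp d p)`. -/
noncomputable abbrev AwayXAddCY (c : ℚ) : Type := Localization.Away ((X 0 + C c) * X 1 : R2)

namespace Bloc

theorem isUnit_algebraMap_X (i : Fin 2) : IsUnit (algebraMap R2 Bloc (X i)) := by
  have h := IsLocalization.Away.algebraMap_isUnit (S := Bloc) (X 0 * X 1 : R2)
  rw [map_mul, IsUnit.mul_iff] at h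
  fin_cases i
  exacts [h.1, h.2]

noncomputable def unitX : Blocˣ := (isUnit_algebraMap_X 0).unit

noncomputable def unitY : Blocˣ := (isUnit_algebraMap_X 1).unit

@[simp]
theorem val_unitX : (unitX : Bloc) = algebraMap R2 Bloc (X 0) := IsUnit.unit_spec _

@[simp]
theorem val_unitY : (unitY : Bloc) = algebraMap R2 Bloc (X 1) := IsUnit.unit_spec _

theorem val_mul_unitY_inv_sq_mul (u : Blocˣ) :
    ((u * unitY⁻¹ ^ 2 : Blocˣ) : Bloc) * algebraMap R2 Bloc (X 1) ^ 2 = u := by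
  rw [← val_unitY, ← Units.val_pow_eq_pow_val, ← Units.val_mul, inv_pow, inv_mul_cancel_right]

end Bloc

open Bloc

section Pullback

variable (c : ℚ) (d : ℕ)

/-- The pullback along `(x, y) ↦ (x^d/y² - c, x)`, on polynomials. -/
noncomputable def pullbackPoly : R2 →+* Bloc :=
  eval₂Hom ((algebraMap R2 Bloc).comp C)
    ![((unitX ^ d * unitY⁻¹ ^ 2 : Blocˣ) : Bloc) - algebraMap R2 Bloc (C c), unitX]

@[simp]
theorem pullbackPoly_C (q : ℚ) : pullbackPoly c d (C q) = algebraMap R2 Bloc (C q) :=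
  eval₂Hom_C _ _ _

theorem pullbackPoly_X_zero :
    pullbackPoly c d (X 0) =
      ((unitX ^ d * unitY⁻¹ ^ 2 : Blocˣ) : Bloc) - algebraMap R2 Bloc (C c) :=
  eval₂Hom_X' _ _ _

@[simp]
theorem pullbackPoly_X_one : pullbackPoly c d (X 1) = unitX :=
  eval₂Hom_X' _ _ _

theorem pullbackPoly_X_zero_add_C :
    pullbackPoly c d (X 0 + C c) = ((unitX ^ d * unitY⁻¹ ^ 2 : Blocˣ) : Bloc) := by
  rw [map_add, pullbackPoly_X_zero, pullbackPoly_C, sub_add_cancel]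

theorem pullbackPoly_X_zero_add_C_mul_X_one :
    pullbackPoly c d ((X 0 + C c) * X 1) = ((unitX ^ (d + 1) * unitY⁻¹ ^ 2 : Blocˣ) : Bloc) := by
  rw [map_mul, pullbackPoly_X_zero_add_C, pullbackPoly_X_one, ← Units.val_mul, pow_succ unitX,
    mul_right_comm]

noncomputable def pullback : AwayXAddCY c →+* Bloc :=
  IsLocalization.Away.lift _ (pullbackPoly_X_zero_add_C_mul_X_one c d ▸ Units.isUnit _)

@[simp]
theorem pullback_algebraMap (a : R2) :
    pullback c d (algebraMap R2 (AwayXAddCY c) a) = pullbackPoly c d a :=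
  IsLocalization.Away.lift_eq _ _ a

theorem pullback_invSelf :
    pullback c d (IsLocalization.Away.invSelf ((X 0 + C c) * X 1 : R2)) =
      (((unitX ^ (d + 1) * unitY⁻¹ ^ 2)⁻¹ : Blocˣ) : Bloc) :=
  Units.eq_inv_of_mul_eq_one_left <| by
    rw [← pullbackPoly_X_zero_add_C_mul_X_one, ← pullback_algebraMap, ← map_mul,
      IsLocalization.Away.mul_invSelf, map_one]

noncomputable def rangeUnits : Submonoid Blocˣ :=
  (pullback c d).range.toSubmonoid.comap (Units.coeHom Bloc)

theorem mem_rangeUnits_of_pullback_eq {u : Blocˣ} (a : AwayXAddCY c) (h : pullback c d a = u) :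
    u ∈ rangeUnits c d :=
  ⟨a, h⟩

theorem unitX_mem_rangeUnits : unitX ∈ rangeUnits c d :=
  mem_rangeUnits_of_pullback_eq c d _ <| by rw [pullback_algebraMap, pullbackPoly_X_one]

theorem unitX_inv_mem_rangeUnits : unitX⁻¹ ∈ rangeUnits c d := by
  have h₁ : unitX ^ d * unitY⁻¹ ^ 2 ∈ rangeUnits c d :=
    mem_rangeUnits_of_pullback_eq c d (algebraMap R2 _ (X 0 + C c)) <| by
      rw [pullback_algebraMap, pullbackPoly_X_zero_add_C]
  have h₂ : (unitX ^ (d + 1) * unitY⁻¹ ^ 2)⁻¹ ∈ rangeUnits c d :=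
    mem_rangeUnits_of_pullback_eq c d _ (pullback_invSelf c d)
  convert mul_mem h₁ h₂ using 1
  group

theorem unitY_inv_sq_mem_rangeUnits : unitY⁻¹ ^ 2 ∈ rangeUnits c d := by
  have h : unitX ^ (d + 1) * unitY⁻¹ ^ 2 ∈ rangeUnits c d :=
    mem_rangeUnits_of_pullback_eq c d (algebraMap R2 _ ((X 0 + C c) * X 1)) <| by
      rw [pullback_algebraMap, pullbackPoly_X_zero_add_C_mul_X_one]
  convert mul_mem (pow_mem (unitX_inv_mem_rangeUnits c d) (d + 1)) h using 1
  group

theorem unitY_sq_mem_rangeUnits : unitY ^ 2 ∈ rangeUnits c d := by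
  have h : (unitX ^ (d + 1) * unitY⁻¹ ^ 2)⁻¹ ∈ rangeUnits c d :=
    mem_rangeUnits_of_pullback_eq c d _ (pullback_invSelf c d)
  convert mul_mem (pow_mem (unitX_mem_rangeUnits c d) (d + 1)) h using 1
  rw [mul_inv, inv_pow, inv_inv, mul_inv_cancel_left]

theorem pullback_isIntegralElem_unitY : (pullback c d).IsIntegralElem (unitY : Bloc) := by
  obtain ⟨a, ha⟩ := unitY_sq_mem_rangeUnits c d
  exact ⟨Polynomial.X ^ 2 - Polynomial.C a, Polynomial.monic_X_pow_sub_C a two_ne_zero,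
    by simp [ha]⟩

theorem pullback_finite : (pullback c d).Finite := by
  let _ := (pullback c d).toAlgebra
  let T := Algebra.adjoin (AwayXAddCY c) {(unitY : Bloc)}
  have mem_T : ∀ u ∈ rangeUnits c d, (u : Bloc) ∈ T := by
    rintro u ⟨a, ha⟩
    rw [Units.coeHom_apply] at ha
    exact ha ▸ T.algebraMap_mem a
  have hy : (unitY : Bloc) ∈ T := Algebra.self_mem_adjoin_singleton _ _
  have hx : (unitX : Bloc) ∈ T := mem_T _ (unitX_mem_rangeUnits c d)
  have hxy_inv : (((unitX * unitY)⁻¹ : Blocˣ) : Bloc) ∈ T := by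
    have h : (unitX * unitY)⁻¹ = unitX⁻¹ * unitY⁻¹ ^ 2 * unitY := by
      rw [mul_inv]
      group
    rw [h, Units.val_mul, Units.val_mul]
    exact mul_mem (mul_mem (mem_T _ (unitX_inv_mem_rangeUnits c d))
      (mem_T _ (unitY_inv_sq_mem_rangeUnits c d))) hy
  have hT : T = ⊤ := by
    refine eq_top_iff.2 fun z _ ↦
      IsLocalization.Away.mem_of_algebraMap_mem (X 0 * X 1 : R2) T ?_ ?_ hxy_inv z
    · refine MvPolynomial.map_mem_of_map_C_mem_of_map_X_mem _ T (fun q ↦ ?_)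
        (Fin.forall_fin_two.2 ⟨by simpa using hx, by simpa using hy⟩)
      rw [← pullbackPoly_C c d, ← pullback_algebraMap]
      exact T.algebraMap_mem _
    · rw [map_mul, ← val_unitX, ← val_unitY, ← Units.val_mul, Units.mul_inv]
  refine ⟨?_⟩
  rw [← Algebra.top_toSubmodule, ← hT]
  exact IsIntegral.fg_adjoin_singleton (pullback_isIntegralElem_unitY c d)

end Pullback

theorem stmt13_general (d p : ℕ) :
    ∃ φ : Aloc d p →+* Bloc,
      (∀ q : ℚ, φ (algebraMap R2 (Aloc d p) (C q)) = algebraMap R2 Bloc (C q)) ∧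
      (φ (algebraMap R2 (Aloc d p) (X 0)) * algebraMap R2 Bloc (X 1) ^ 2 =
        algebraMap R2 Bloc ((X 0) ^ d - C (cdp d p) * (X 1) ^ 2)) ∧
      (φ (algebraMap R2 (Aloc d p) (X 1)) = algebraMap R2 Bloc (X 0)) ∧
      (φ (algebraMap R2 (Aloc d p) ((X 0 + C (cdp d p)) * X 1)) *
          algebraMap R2 Bloc (X 1) ^ 2 = algebraMap R2 Bloc ((X 0) ^ (d + 1))) ∧
      IsUnit (φ (algebraMap R2 (Aloc d p) ((X 0 + C (cdp d p)) * X 1))) ∧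
      φ.Finite := by
  refine ⟨pullback (cdp d p) d, fun q ↦ ?_, ?_, ?_, ?_, ?_, pullback_finite _ d⟩
  · rw [pullback_algebraMap, pullbackPoly_C]
  · rw [pullback_algebraMap, pullbackPoly_X_zero, sub_mul, val_mul_unitY_inv_sq_mul]
    simp
  · rw [pullback_algebraMap, pullbackPoly_X_one, val_unitX]
  · rw [pullback_algebraMap, pullbackPoly_X_zero_add_C_mul_X_one, val_mul_unitY_inv_sq_mul]
    simp
  · rw [pullback_algebraMap, pullbackPoly_X_zero_add_C_mul_X_one]
    exact Units.isUnit _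

/-- For `d ≥ 3` and `p` prime, the `ℚ`-algebra homomorphism `φ : A → B` determined by
`x ↦ x^d/y² - p^{-(d-3)}`, `y ↦ x` is well defined — in particular the image of
`(x + p^{-(d-3)})·y` is `x^{d+1}/y²`, a unit of `B` — and `φ` is a finite ring
homomorphism. (The equalities below are written multiplied through by `y²`, which is a
unit of `B`.) -/
theorem stmt13 (d p : ℕ) (hd : 3 ≤ d) (hp : p.Prime) :
    ∃ φ : Aloc d p →+* Bloc,
      (∀ q : ℚ, φ (algebraMap R2 (Aloc d p) (C q)) = algebraMap R2 Bloc (C q)) ∧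
      (φ (algebraMap R2 (Aloc d p) (X 0)) * algebraMap R2 Bloc (X 1) ^ 2 =
        algebraMap R2 Bloc ((X 0) ^ d - C (cdp d p) * (X 1) ^ 2)) ∧
      (φ (algebraMap R2 (Aloc d p) (X 1)) = algebraMap R2 Bloc (X 0)) ∧
      (φ (algebraMap R2 (Aloc d p) ((X 0 + C (cdp d p)) * X 1)) *
          algebraMap R2 Bloc (X 1) ^ 2 = algebraMap R2 Bloc ((X 0) ^ (d + 1))) ∧
      IsUnit (φ (algebraMap R2 (Aloc d p) ((X 0 + C (cdp d p)) * X 1))) ∧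
      φ.Finite :=
  stmt13_general d p
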